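/- For integers D ≥ 1, n ≥ 0, l ≥ 0, the quantity d(l) := Σ_{k=0}^{l} C(D+k, k)·(C(2n, l−k) − C(2n, l−2−k)) equals dim S(V)_l − dim S(V)_{l−2}, where dim S(V)_m = Σ_{k=0}^{m} C(D+k,k)·C(2n, m−k) (and dim S(V)_m = 0 for m < 0); moreover d(l) ≥ 0 whenever D > 2n. -/
import Mathlib


/-- `C(2n, j)` for an integer argument `j`, zero when `j < 0`. -/
def chooseInt (a : ℕ) (j : ℤ) : ℤ := if j < 0 then 0 else (a.choose j.toNat : ℤ)

/-- `dim S(V)_m` for integer `m`, zero when `m < 0`. -/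
def dimS (D n : ℕ) (m : ℤ) : ℤ :=
  if m < 0 then 0
  else ∑ k ∈ Finset.range (m.toNat + 1), ((D + k).choose k : ℤ) * ((2 * n).choose (m.toNat - k) : ℤ)

private def F (D n l : ℕ) : ℤ :=
  ∑ k ∈ Finset.range (l + 1), ((D + k).choose k : ℤ) * ((2 * n).choose (l - k) : ℤ)

private def G (D n l : ℕ) : ℤ :=
  ∑ k ∈ Finset.range (l + 1), ((D - 1 + k).choose k : ℤ) * ((2 * n).choose (l - k) : ℤ)

private lemma F_nonneg (D n l : ℕ) : 0 ≤ F D n l :=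
  Finset.sum_nonneg fun k _ => by positivity

private lemma G_nonneg (D n l : ℕ) : 0 ≤ G D n l :=
  Finset.sum_nonneg fun k _ => by positivity

private lemma chooseInt_eq (a l k : ℕ) (h : k ≤ l) :
    chooseInt a ((l : ℤ) - k) = ((a.choose (l - k) : ℕ) : ℤ) := by
  have h0 : ¬ ((l : ℤ) - k < 0) := by omega
  have h1 : ((l : ℤ) - k).toNat = l - k := by omega
  rw [chooseInt, if_neg h0, h1]

private lemma F_succ (D n l : ℕ) (hD : 1 ≤ D) :
    F D n (l + 1) = F D n l + G D n (l + 1) := by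
  unfold F G
  rw [Finset.sum_range_succ'
        (fun k => ((D + k).choose k : ℤ) * ((2 * n).choose (l + 1 - k) : ℤ)) (l + 1),
      Finset.sum_range_succ'
        (fun k => ((D - 1 + k).choose k : ℤ) * ((2 * n).choose (l + 1 - k) : ℤ)) (l + 1)]
  simp only [Nat.add_zero, Nat.choose_zero_right, Nat.sub_zero, Nat.cast_one, one_mul]
  rw [← add_assoc]
  congr 1
  rw [← Finset.sum_add_distrib]
  apply Finset.sum_congr rfl
  intro i _
  have h1 : l + 1 - (i + 1) = l - i := by omega
  have h2 : D + (i + 1) = (D + i) + 1 := by omega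
  have h3 : D - 1 + (i + 1) = D + i := by omega
  rw [h1, h2, h3, Nat.choose_succ_succ' (D + i) i]
  push_cast
  ring

private lemma sum_chooseInt (D n l : ℕ) :
    ∑ k ∈ Finset.range (l + 1), ((D + k).choose k : ℤ) * chooseInt (2 * n) ((l : ℤ) - k)
      = F D n l := by
  apply Finset.sum_congr rfl
  intro k hk
  rw [Finset.mem_range] at hk
  rw [chooseInt_eq _ _ _ (by omega)]

private lemma sum_chooseInt_shift (D n l : ℕ) :
    ∑ k ∈ Finset.range (l + 1), ((D + k).choose k : ℤ) * chooseInt (2 * n) ((l : ℤ) - 2 - k)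
      = dimS D n ((l : ℤ) - 2) := by
  rcases Nat.lt_or_ge l 2 with hl | hl
  · rw [dimS, if_pos (by omega)]
    apply Finset.sum_eq_zero
    intro k _
    rw [chooseInt, if_pos (by omega), mul_zero]
  · obtain ⟨m, rfl⟩ : ∃ m, l = m + 2 := ⟨l - 2, by omega⟩
    have hm : ((m : ℤ) + 2 - 2).toNat = m := by omega
    rw [dimS, if_neg (by omega)]
    rw [show ((m + 2 : ℕ) : ℤ) = (m : ℤ) + 2 by push_cast; ring]
    rw [hm]
    have hsub : (Finset.range (m + 1)) ⊆ Finset.range (m + 2 + 1) :=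
      Finset.range_subset_range.mpr (by omega)
    have hzero : ∀ k ∈ Finset.range (m + 2 + 1), k ∉ Finset.range (m + 1) →
        ((D + k).choose k : ℤ) * chooseInt (2 * n) ((m : ℤ) + 2 - 2 - k) = 0 := by
      intro k _ hk
      rw [Finset.mem_range] at hk
      rw [chooseInt, if_pos (by omega), mul_zero]
    rw [← Finset.sum_subset hsub hzero]
    apply Finset.sum_congr rfl
    intro k hk
    rw [Finset.mem_range] at hk
    have : (m : ℤ) + 2 - 2 - k = (m : ℤ) - k := by ring
    rw [this, chooseInt_eq _ _ _ (by omega)]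

private lemma dimS_nat (D n l : ℕ) : dimS D n (l : ℤ) = F D n l := by
  rw [dimS, if_neg (by omega), Int.toNat_natCast]
  rfl

/-- `d(l) = Σ_{k=0}^{l} C(D+k,k)(C(2n,l−k) − C(2n,l−2−k))` equals
`dim S(V)_l − dim S(V)_{l−2}`, and is nonnegative when `D > 2n`. -/
theorem dim_difference (D n l : ℕ) (hD : 1 ≤ D) :
    (∑ k ∈ Finset.range (l + 1),
        ((D + k).choose k : ℤ) *
          (chooseInt (2 * n) ((l : ℤ) - k) - chooseInt (2 * n) ((l : ℤ) - 2 - k)))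
      = dimS D n l - dimS D n ((l : ℤ) - 2) ∧
    (D > 2 * n →
      0 ≤ ∑ k ∈ Finset.range (l + 1),
        ((D + k).choose k : ℤ) *
          (chooseInt (2 * n) ((l : ℤ) - k) - chooseInt (2 * n) ((l : ℤ) - 2 - k))) := by
  have key : (∑ k ∈ Finset.range (l + 1),
        ((D + k).choose k : ℤ) *
          (chooseInt (2 * n) ((l : ℤ) - k) - chooseInt (2 * n) ((l : ℤ) - 2 - k)))
      = F D n l - dimS D n ((l : ℤ) - 2) := by
    simp only [mul_sub]
    rw [Finset.sum_sub_distrib, sum_chooseInt, sum_chooseInt_shift]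
  constructor
  · rw [key, dimS_nat]
  · intro _
    rw [key]
    rcases Nat.lt_or_ge l 2 with hl | hl
    · have : dimS D n ((l : ℤ) - 2) = 0 := by rw [dimS, if_pos (by omega)]
      rw [this, sub_zero]
      exact F_nonneg D n l
    · obtain ⟨m, rfl⟩ : ∃ m, l = m + 2 := ⟨l - 2, by omega⟩
      have : dimS D n (((m + 2 : ℕ) : ℤ) - 2) = F D n m := by
        rw [show ((m + 2 : ℕ) : ℤ) - 2 = (m : ℤ) by push_cast; ring, dimS_nat]
      rw [this, F_succ D n (m + 1) hD, F_succ D n m hD]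
      have := G_nonneg D n (m + 1)
      have := G_nonneg D n (m + 2)
      linarith
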